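/- arXiv:math/0412019 — 2 statements merged into one kernel-verified Lean document; each statement's English description precedes it below -/
import Mathlib

section
/- The characteristic function of the set E of legal it-codewords over the alphabet {l, r, m, f, t} is computable by a Turing machine in polynomial time: the function sending a word w ∈ {l, r, m, f, t}* to the Boolean value 'w ∈ E' is computable in time bounded by a polynomial in the length of w. -/
/-- The alphabet Σ = {l, r, m, f, t} of the it-encoding. -/
inductive ITLetter : Type
  | l | r | m | f | t
  deriving DecidableEq

instance : Fintype ITLetter :=
  ⟨⟨[ITLetter.l, ITLetter.r, ITLetter.m, ITLetter.f, ITLetter.t], by decide⟩,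
    fun x => by cases x <;> decide⟩

/-- Replace the `s`-th open slot (`none`, numbered from the left starting at 1)
of a list over `ℕ ∪ {⋄}` by the given replacement list. -/
def replaceSlot : List (Option ℕ) → ℕ → List (Option ℕ) → List (Option ℕ)
  | [], _, _ => []
  | none :: xs, s, repl => if s ≤ 1 then repl ++ xs else none :: replaceSlot xs (s - 1) repl
  | some a :: xs, s, repl => some a :: replaceSlot xs s repl

/-- One step of the it-decoding: the state is (current list, next entry i, next slot s). -/
def itStep : (List (Option ℕ) × ℕ × ℕ) → ITLetter → (List (Option ℕ) × ℕ × ℕ)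
  | (p, i, s), .t => (p, i, s + 1)
  | (p, i, s), .l => (replaceSlot p s [some i, none], i + 1, 1)
  | (p, i, s), .r => (replaceSlot p s [none, some i], i + 1, 1)
  | (p, i, s), .m => (replaceSlot p s [none, some i, none], i + 1, 1)
  | (p, i, s), .f => (replaceSlot p s [some i], i + 1, 1)

/-- Run the it-decoding on a word, starting from the list [⋄], i = 1, s = 1. -/
def itRun (w : List ITLetter) : List (Option ℕ) × ℕ × ℕ :=
  w.foldl itStep ([none], 1, 1)

/-- The decoded permutation of a word: the final list (with slots removed). -/
def itDecode (w : List ITLetter) : List ℕ :=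
  (itRun w).1.reduceOption

/-- The number of `t` letters at the end of a word (the `t`s immediately
preceding the next letter). -/
def trailingT (w : List ITLetter) : ℕ :=
  (w.reverse.takeWhile (· = ITLetter.t)).length

/-- A word is a legal it-codeword if it ends with `f`, each non-`t` letter is
immediately preceded by at most (#m − #f) letters `t` (counted in the prefix
before it), and the final list contains no open slot. -/
def ITLegal (w : List ITLetter) : Prop :=
  w.getLast? = some ITLetter.f ∧
  (∀ j : Fin w.length, w.get j ≠ ITLetter.t →
    (trailingT (w.take j) : ℤ) ≤
      ((w.take j).count ITLetter.m : ℤ) - ((w.take j).count ITLetter.f : ℤ)) ∧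
  none ∉ (itRun w).1

instance : DecidablePred ITLegal := fun w => by
  unfold ITLegal; infer_instance

/-- The trivial finite encoding of words over the it-alphabet. -/
def itFinEncoding : Computability.Encoding (List ITLetter) ITLetter where
  encode := id
  decode := fun l => some l
  decode_encode := fun _ => rfl

/-!
An `l` or `r` fills one slot and opens one, an `m` opens two and an `f` opens none, so as long as
every run of `t`s names an existing slot the decoding has `#m - #f + 1` open slots. Hence a word
is legal iff it ends in `f`, the slack `#m - #f - (trailing t's)` is nonnegative before every
non-`t` letter, and `#f = #m + 1`. This is decided in one left-to-right pass keeping the slack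
and the current run of `t`s as two unary counters, which a stack machine with two counter stacks
carries out in a linear number of steps.
-/

namespace ITCode

open ITLetter

theorem count_none_replaceSlot (repl : List (Option ℕ)) :
    ∀ (p : List (Option ℕ)) (s : ℕ), 1 ≤ s → s ≤ p.count none →
      (replaceSlot p s repl).count none + 1 = p.count none + repl.count none
  | [], s, _, hs => by simp only [List.count_nil] at hs; omega
  | none :: xs, s, h1, hs => by
    by_cases h : s ≤ 1
    · simp only [replaceSlot, h, ↓reduceIte, List.count_append, List.count_cons_self]
      omega
    · have := count_none_replaceSlot repl xs (s - 1) (by omega)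
        (by simp only [List.count_cons_self] at hs; omega)
      simp only [replaceSlot, h, ↓reduceIte, List.count_cons_self]
      omega
  | some a :: xs, s, h1, hs => by
    have := count_none_replaceSlot repl xs s h1 (by simpa using hs)
    simp only [replaceSlot, ne_eq, reduceCtorEq, not_false_eq_true, List.count_cons_of_ne]
    omega

theorem itRun_concat (u : List ITLetter) (x : ITLetter) :
    itRun (u ++ [x]) = itStep (itRun u) x := by
  simp [itRun]

theorem trailingT_concat_t (u : List ITLetter) : trailingT (u ++ [t]) = trailingT u + 1 := by
  simp [trailingT]

theorem trailingT_concat_of_ne {x : ITLetter} (u : List ITLetter) (hx : x ≠ t) :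
    trailingT (u ++ [x]) = 0 := by
  simp [trailingT, hx]

theorem trailingT_eq_zero_of_getLast? {u : List ITLetter} {x : ITLetter} (hx : x ≠ t)
    (h : u.getLast? = some x) : trailingT u = 0 := by
  obtain ⟨v, rfl⟩ : ∃ v, u = v ++ [x] := by
    rw [List.getLast?_eq_some_iff] at h
    exact h
  exact trailingT_concat_of_ne v hx

/-- The second condition of `ITLegal`: before every non-`t` letter, the run of `t`s
selects an existing slot. -/
def Admissible (w : List ITLetter) : Prop :=
  ∀ j : Fin w.length, w.get j ≠ t →
    (trailingT (w.take j) : ℤ) ≤ ((w.take j).count m : ℤ) - ((w.take j).count f : ℤ)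

def slack (u : List ITLetter) : ℤ :=
  (u.count m : ℤ) - u.count f - trailingT u

theorem admissible_nil : Admissible [] := fun j => j.elim0

theorem admissible_concat_iff {u : List ITLetter} {x : ITLetter} :
    Admissible (u ++ [x]) ↔ Admissible u ∧ (x ≠ t → 0 ≤ slack u) := by
  simp only [Admissible, Fin.forall_iff, List.length_append, List.length_singleton,
    Nat.forall_lt_succ_right', List.get_eq_getElem, List.getElem_concat_length,
    List.take_left, slack]
  constructor
  · rintro ⟨hu, hx⟩
    refine ⟨fun j hj => ?_, fun h => by linarith [hx h]⟩
    simpa [List.getElem_append_left hj, List.take_append_of_le_length hj.le] using hu j hj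
  · rintro ⟨hu, hx⟩
    refine ⟨fun j hj => ?_, fun h => by linarith [hx h]⟩
    simpa [List.getElem_append_left hj, List.take_append_of_le_length hj.le] using hu j hj

theorem Admissible.of_append {u v : List ITLetter} (h : Admissible (u ++ v)) : Admissible u := by
  induction v using List.reverseRecOn with
  | nil => simpa using h
  | append_singleton v x ih =>
    rw [← List.append_assoc] at h
    exact ih (admissible_concat_iff.mp h).1

theorem itRun_of_admissible {u : List ITLetter} (h : Admissible u) :
    (itRun u).1.count none + u.count f = u.count m + 1 ∧ (itRun u).2.2 = trailingT u + 1 := by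
  induction u using List.reverseRecOn with
  | nil => simp [itRun, trailingT]
  | append_singleton u x ih =>
    obtain ⟨hu, hx⟩ := admissible_concat_iff.mp h
    obtain ⟨hnone, hs⟩ := ih hu
    rcases hrun : itRun u with ⟨p, i, s⟩
    rw [hrun] at hnone hs
    dsimp only at hnone hs
    rw [itRun_concat, hrun]
    cases x with
    | t => simp [itStep, trailingT_concat_t, hnone, hs]
    | _ =>
      have hslot : s ≤ p.count none := by have := hx (by simp); simp only [slack] at this; omega
      have key (repl) : (replaceSlot p s repl).count none = p.count none + repl.count none - 1 := by
        have := count_none_replaceSlot repl p s (by omega) hslot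
        omega
      simp only [itStep, key, List.count_cons, List.count_nil, List.count_append, beq_iff_eq,
        reduceCtorEq, ↓reduceIte, trailingT_concat_of_ne, ne_eq, not_false_eq_true, and_true]
      omega

theorem itLegal_iff {w : List ITLetter} :
    ITLegal w ↔ w.getLast? = some f ∧ Admissible w ∧ w.count f = w.count m + 1 := by
  refine and_congr_right fun _ => ?_
  refine ⟨fun ⟨hw, hnone⟩ => ⟨hw, ?_⟩, fun ⟨hw, hcount⟩ => ⟨hw, ?_⟩⟩
  · have := (itRun_of_admissible hw).1
    rw [List.count_eq_zero.mpr hnone] at this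
    omega
  · have := (itRun_of_admissible hw).1
    exact List.count_eq_zero.mp (by omega)

theorem slack_concat_t (u : List ITLetter) : slack (u ++ [t]) = slack u - 1 := by
  simp only [slack, List.count_append, List.count_cons, List.count_nil, beq_iff_eq, reduceCtorEq,
    ↓reduceIte, trailingT_concat_t]
  push_cast
  ring

theorem slack_concat_of_ne {x : ITLetter} (u : List ITLetter) (hx : x ≠ t) :
    slack (u ++ [x]) = slack u + trailingT u + [x].count m - [x].count f := by
  simp only [slack, List.count_append, trailingT_concat_of_ne u hx]
  push_cast
  ring

theorem not_admissible_append_of_slack_neg {u r : List ITLetter} (hu : slack u < 0)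
    (hr : ∃ x ∈ r, x ≠ t) : ¬ Admissible (u ++ r) := by
  induction r generalizing u with
  | nil => simp at hr
  | cons x r ih =>
    by_cases hx : x = t
    · subst hx
      have hr' : ∃ y ∈ r, y ≠ t := by simpa using hr
      simpa using ih (u := u ++ [t]) (by rw [slack_concat_t]; omega) hr'
    · intro h
      rw [← List.singleton_append, ← List.append_assoc] at h
      exact (admissible_concat_iff.mp h.of_append).2 hx |>.not_gt hu

theorem not_itLegal_append_of_slack_neg {u v : List ITLetter} (hu : slack u < 0) (hv : v ≠ []) :
    ¬ ITLegal (u ++ v) := by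
  rw [itLegal_iff, List.getLast?_append_of_ne_nil _ hv]
  rintro ⟨hlast, hadm, -⟩
  exact not_admissible_append_of_slack_neg hu ⟨f, List.mem_of_getLast? hlast, by decide⟩ hadm

/-- A one-pass scan deciding legality with two counters: `c` is the slack of the prefix read
so far and `k` its trailing run of `t`s. -/
def scan : List ITLetter → ℕ → ℕ → Bool
  | [], _, _ => false
  | t :: w, c, k => if c = 0 then false else scan w (c - 1) (k + 1)
  | m :: w, c, k => scan w (c + k + 1) 0
  | l :: w, c, k => scan w (c + k) 0
  | r :: w, c, k => scan w (c + k) 0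
  | f :: w, c, k => if c + k = 0 then w.isEmpty else scan w (c + k - 1) 0

structure ScanInv (u : List ITLetter) (c k : ℕ) : Prop where
  admissible : Admissible u
  slack_eq : slack u = c
  trailingT_eq : trailingT u = k

theorem ScanInv.nil : ScanInv [] 0 0 :=
  ⟨admissible_nil, by simp [slack, trailingT], by simp [trailingT]⟩

theorem ScanInv.concat_t {u : List ITLetter} {c k : ℕ} (h : ScanInv u (c + 1) k) :
    ScanInv (u ++ [t]) c (k + 1) where
  admissible := admissible_concat_iff.mpr ⟨h.admissible, fun h => absurd rfl h⟩
  slack_eq := by rw [slack_concat_t, h.slack_eq]; push_cast; ring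
  trailingT_eq := by rw [trailingT_concat_t, h.trailingT_eq]

theorem ScanInv.concat_of_ne {u : List ITLetter} {x : ITLetter} {c k c' : ℕ} (h : ScanInv u c k)
    (hx : x ≠ t) (hc' : (c' : ℤ) = c + k + [x].count m - [x].count f) :
    ScanInv (u ++ [x]) c' 0 where
  admissible := admissible_concat_iff.mpr ⟨h.admissible, fun _ => h.slack_eq ▸ by positivity⟩
  slack_eq := by rw [slack_concat_of_ne u hx, h.slack_eq, h.trailingT_eq, hc']
  trailingT_eq := trailingT_concat_of_ne u hx

theorem scan_iff {u : List ITLetter} {c k : ℕ} (h : ScanInv u c k) (w : List ITLetter) :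
    scan w c k = true ↔ ITLegal (u ++ w) := by
  induction w generalizing u c k with
  | nil =>
    simp only [scan, List.append_nil, Bool.false_eq_true, false_iff, itLegal_iff]
    rintro ⟨hlast, -, hcount⟩
    have hk := h.trailingT_eq ▸ trailingT_eq_zero_of_getLast? (by decide) hlast
    have := h.slack_eq
    simp only [slack] at this
    omega
  | cons x w ih =>
    rw [List.append_cons]
    cases x with
    | t =>
      cases c with
      | zero =>
        simp only [scan, if_pos, Bool.false_eq_true, false_iff]
        rcases w with _ | ⟨y, w⟩
        · simp [itLegal_iff]
        · exact not_itLegal_append_of_slack_neg (by rw [slack_concat_t, h.slack_eq]; simp)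
            (List.cons_ne_nil y w)
      | succ c => exact ih h.concat_t
    | m => exact ih (h.concat_of_ne (by decide) (by simp))
    | l => exact ih (h.concat_of_ne (by decide) (by simp))
    | r => exact ih (h.concat_of_ne (by decide) (by simp))
    | f =>
      by_cases hck : c + k = 0
      · rcases w with _ | ⟨y, w⟩
        · simp only [scan, hck, if_true, List.isEmpty_nil, List.append_nil, true_iff, itLegal_iff]
          have hslack := h.slack_eq
          refine ⟨by simp, admissible_concat_iff.mpr ⟨h.admissible, fun _ => by omega⟩, ?_⟩
          simp only [slack, h.trailingT_eq] at hslack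
          simp only [List.count_append, List.count_singleton_self, List.count_cons_of_ne,
            List.count_nil, ne_eq, reduceCtorEq, not_false_eq_true]
          omega
        · simp only [scan, hck, if_true, List.isEmpty_cons, Bool.false_eq_true, false_iff]
          refine not_itLegal_append_of_slack_neg ?_ (List.cons_ne_nil y w)
          rw [slack_concat_of_ne u (by decide), h.slack_eq, h.trailingT_eq]
          simp only [List.count_singleton_self, List.count_cons_of_ne, List.count_nil, ne_eq,
            reduceCtorEq, not_false_eq_true, Nat.cast_zero, Nat.cast_one]
          omega
      · simp only [scan, hck, if_false]
        refine ih (h.concat_of_ne (by decide) ?_)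
        simp only [List.count_singleton_self, List.count_cons_of_ne, List.count_nil, ne_eq,
          reduceCtorEq, not_false_eq_true, Nat.cast_zero, Nat.cast_one]
        omega

theorem decide_itLegal_eq_scan (w : List ITLetter) : decide (ITLegal w) = scan w 0 0 := by
  rw [Bool.eq_iff_iff, decide_eq_true_iff, scan_iff ScanInv.nil, List.nil_append]

end ITCode

namespace StateTransition

variable {σ : Type*} {f : σ → Option σ}

theorem EvalsToInTime.nonempty_cons {a a' : σ} {b : Option σ} {n : ℕ} (h : f a = some a')
    (h' : Nonempty (EvalsToInTime f a' b n)) : Nonempty (EvalsToInTime f a b (n + 1)) :=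
  h'.map fun e => ⟨⟨e.steps + 1, by simpa [Function.iterate_succ_apply, flip, h] using
    e.evals_in_steps⟩, Nat.succ_le_succ e.steps_le_m⟩

theorem EvalsToInTime.nonempty_trans {a b : σ} {c : Option σ} {n₁ n₂ : ℕ}
    (h₁ : Nonempty (EvalsToInTime f a b n₁)) (h₂ : Nonempty (EvalsToInTime f b c n₂)) :
    Nonempty (EvalsToInTime f a c (n₂ + n₁)) :=
  h₁.elim fun e₁ => h₂.map fun e₂ => e₁.trans f _ _ _ _ _ e₂

theorem EvalsToInTime.nonempty_mono {a : σ} {b : Option σ} {n n' : ℕ}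
    (h : Nonempty (EvalsToInTime f a b n)) (hn : n ≤ n') : Nonempty (EvalsToInTime f a b n') :=
  h.map fun e => ⟨e.toEvalsTo, e.steps_le_m.trans hn⟩

end StateTransition

namespace ScanTM

open ITLetter Turing TM2 TM2.Stmt StateTransition

inductive Stack : Type
  | input | output | slack | run
  deriving DecidableEq

instance : Fintype Stack :=
  ⟨⟨[Stack.input, .output, .slack, .run], by decide⟩, fun s => by cases s <;> decide⟩

abbrev Stack.Γ : Stack → Type
  | .input => ITLetter
  | .output => Bool
  | .slack | .run => Unit

inductive Label : Type
  | scan | restore | drain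
  deriving DecidableEq

instance : Fintype Label :=
  ⟨⟨[Label.scan, .restore, .drain], by decide⟩, fun s => by cases s <;> decide⟩

abbrev State : Type := Option ITLetter × Bool

def State.init : State := (none, true)

/-- `scan` reads a letter; a `t` moves a unit from the `slack` stack to the `run` stack, any other
letter first moves the run back (`restore`) and then adjusts the slack. `drain` empties all
stacks before halting with `false`, as `haltList` demands. -/
def prog : Label → Stmt Stack.Γ Label State
  | .scan =>
    pop .input (fun _ o => (o, true)) <|
    branch (fun s => s.1.isSome)
      (branch (fun s => s.1 = some t)
        (pop .slack (fun s o => (s.1, o.isSome)) <|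
         branch (fun s => s.2)
           (push .run (fun _ => ()) <| load (fun _ => .init) <| goto fun _ => .scan)
           (load (fun _ => .init) <| goto fun _ => .drain))
        (load (fun s => (s.1, true)) <| goto fun _ => .restore))
      (load (fun _ => .init) <| goto fun _ => .drain)
  | .restore =>
    pop .run (fun s o => (s.1, o.isSome)) <|
    branch (fun s => s.2)
      (push .slack (fun _ => ()) <| load (fun s => (s.1, true)) <| goto fun _ => .restore)
      (branch (fun s => s.1 = some m)
        (push .slack (fun _ => ()) <| load (fun _ => .init) <| goto fun _ => .scan)
        (branch (fun s => s.1 = some f)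
          (pop .slack (fun s o => (s.1, o.isSome)) <|
           branch (fun s => s.2)
             (load (fun _ => .init) <| goto fun _ => .scan)
             (pop .input (fun _ o => (o, true)) <|
              branch (fun s => s.1.isSome)
                (load (fun _ => .init) <| goto fun _ => .drain)
                (load (fun _ => .init) <| push .output (fun _ => true) <| halt)))
          (load (fun _ => .init) <| goto fun _ => .scan)))
  | .drain =>
    pop .input (fun _ o => ((none : Option ITLetter), o.isSome)) <|
    pop .slack (fun s o => (s.1, s.2 || o.isSome)) <|
    pop .run (fun s o => (s.1, s.2 || o.isSome)) <|
    branch (fun s => s.2)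
      (load (fun _ => .init) <| goto fun _ => .drain)
      (load (fun _ => .init) <| push .output (fun _ => false) <| halt)

def scanTM : FinTM2 where
  K := Stack
  k₀ := .input
  k₁ := .output
  Γ := Stack.Γ
  Λ := Label
  main := .scan
  σ := State
  initialState := .init
  Γk₀Fin := inferInstanceAs (Fintype ITLetter)
  m := prog

abbrev Config : Type := Cfg Stack.Γ Label State

/-- The counters `c` and `k` of `ITCode.scan` are kept in unary on the
`slack` and `run` stacks. -/
def contents (w : List ITLetter) (c k : ℕ) (o : List Bool) : ∀ s : Stack, List s.Γ
  | .input => w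
  | .output => o
  | .slack => List.replicate c ()
  | .run => List.replicate k ()

def cfgScan (w : List ITLetter) (c k : ℕ) : Config := ⟨some .scan, .init, contents w c k []⟩

def cfgRestore (x : ITLetter) (w : List ITLetter) (c k : ℕ) : Config :=
  ⟨some .restore, (some x, true), contents w c k []⟩

def cfgDrain (w : List ITLetter) (c k : ℕ) : Config := ⟨some .drain, .init, contents w c k []⟩

def cfgHalt (b : Bool) : Config := ⟨none, .init, contents [] 0 0 [b]⟩

section contents

variable (w : List ITLetter) (c k : ℕ) (o : List Bool)

@[simp] theorem contents_input : contents w c k o .input = w := rfl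
@[simp] theorem contents_output : contents w c k o .output = o := rfl
@[simp] theorem contents_slack : contents w c k o .slack = List.replicate c () := rfl
@[simp] theorem contents_run : contents w c k o .run = List.replicate k () := rfl

@[simp] theorem update_contents_input (w' : List ITLetter) :
    Function.update (contents w c k o) .input w' = contents w' c k o := by
  funext s; cases s <;> simp [Function.update, contents]

@[simp] theorem update_contents_output (o' : List Bool) :
    Function.update (contents w c k o) .output o' = contents w c k o' := by
  funext s; cases s <;> simp [Function.update, contents]

@[simp] theorem update_contents_slack (l : List Unit) :
    Function.update (contents w c k o) .slack l = contents w l.length k o := by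
  funext s; cases s <;> simp [Function.update, contents, List.eq_replicate_iff]

@[simp] theorem update_contents_run (l : List Unit) :
    Function.update (contents w c k o) .run l = contents w c l.length o := by
  funext s; cases s <;> simp [Function.update, contents, List.eq_replicate_iff]

end contents

abbrev step : Config → Option Config := TM2.step prog

theorem step_scan_nil (c k : ℕ) : step (cfgScan [] c k) = some (cfgDrain [] c k) := by
  simp [cfgScan, cfgDrain, prog]

theorem step_scan_t_succ (w : List ITLetter) (c k : ℕ) :
    step (cfgScan (t :: w) (c + 1) k) = some (cfgScan w c (k + 1)) := by
  simp [cfgScan, prog, List.replicate_succ]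

theorem step_scan_t_zero (w : List ITLetter) (k : ℕ) :
    step (cfgScan (t :: w) 0 k) = some (cfgDrain w 0 k) := by
  simp [cfgScan, cfgDrain, prog]

theorem step_scan_of_ne {x : ITLetter} (hx : x ≠ t) (w : List ITLetter) (c k : ℕ) :
    step (cfgScan (x :: w) c k) = some (cfgRestore x w c k) := by
  simp [cfgScan, cfgRestore, prog, hx]

theorem step_restore_succ (x : ITLetter) (w : List ITLetter) (c k : ℕ) :
    step (cfgRestore x w c (k + 1)) = some (cfgRestore x w (c + 1) k) := by
  simp [cfgRestore, prog, List.replicate_succ]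

theorem step_restore_m (w : List ITLetter) (c : ℕ) :
    step (cfgRestore m w c 0) = some (cfgScan w (c + 1) 0) := by
  simp [cfgRestore, cfgScan, prog, State.init]

theorem step_restore_l (w : List ITLetter) (c : ℕ) :
    step (cfgRestore l w c 0) = some (cfgScan w c 0) := by
  simp [cfgRestore, cfgScan, prog, State.init]

theorem step_restore_r (w : List ITLetter) (c : ℕ) :
    step (cfgRestore r w c 0) = some (cfgScan w c 0) := by
  simp [cfgRestore, cfgScan, prog, State.init]

theorem step_restore_f_succ (w : List ITLetter) (c : ℕ) :
    step (cfgRestore f w (c + 1) 0) = some (cfgScan w c 0) := by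
  simp [cfgRestore, cfgScan, prog, State.init, List.replicate_succ]

theorem step_restore_f_zero_nil : step (cfgRestore f [] 0 0) = some (cfgHalt true) := by
  simp [cfgRestore, cfgHalt, prog, State.init]

theorem step_restore_f_zero_cons (y : ITLetter) (w : List ITLetter) :
    step (cfgRestore f (y :: w) 0 0) = some (cfgDrain w 0 0) := by
  simp [cfgRestore, cfgDrain, prog, State.init]

theorem step_drain_nil : step (cfgDrain [] 0 0) = some (cfgHalt false) := by
  simp [cfgDrain, cfgHalt, prog, State.init]

theorem step_drain {w : List ITLetter} {c k : ℕ} (h : ¬(w = [] ∧ c = 0 ∧ k = 0)) :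
    step (cfgDrain w c k) = some (cfgDrain w.tail (c - 1) (k - 1)) := by
  have hpop : (w.head?.isSome || (List.replicate c ()).head?.isSome
      || (List.replicate k ()).head?.isSome) = true := by
    rcases w with _ | ⟨y, w⟩ <;> rcases c with _ | c <;> rcases k with _ | k <;>
      simp_all [List.replicate_succ]
  have hc : (List.replicate c ()).tail = List.replicate (c - 1) () := by
    rcases c with _ | c <;> simp [List.replicate_succ]
  have hk : (List.replicate k ()).tail = List.replicate (k - 1) () := by
    rcases k with _ | k <;> simp [List.replicate_succ]
  simp [cfgDrain, prog, hc, hk, hpop]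

open EvalsToInTime

theorem drain_evalsToInTime (w : List ITLetter) (c k : ℕ) :
    Nonempty
      (EvalsToInTime step (cfgDrain w c k) (some (cfgHalt false)) (w.length + c + k + 1)) := by
  suffices ∀ n w c k, w.length + c + k ≤ n →
      Nonempty (EvalsToInTime step (cfgDrain w c k) (some (cfgHalt false)) (n + 1)) from
    this _ w c k le_rfl
  intro n
  induction n with
  | zero =>
    intro w c k h
    obtain ⟨rfl, rfl, rfl⟩ : w = [] ∧ c = 0 ∧ k = 0 := by
      refine ⟨List.eq_nil_of_length_eq_zero ?_, ?_, ?_⟩ <;> omega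
    exact nonempty_cons step_drain_nil ⟨EvalsToInTime.refl _ _⟩
  | succ n ih =>
    intro w c k h
    by_cases hz : w = [] ∧ c = 0 ∧ k = 0
    · obtain ⟨rfl, rfl, rfl⟩ := hz
      exact nonempty_mono (nonempty_cons step_drain_nil ⟨EvalsToInTime.refl _ _⟩) (by omega)
    · refine nonempty_cons (step_drain hz) (ih _ _ _ ?_)
      rcases w with _ | ⟨y, w⟩ <;> simp_all <;> omega

theorem restore_evalsToInTime (x : ITLetter) (w : List ITLetter) (c k : ℕ) :
    Nonempty (EvalsToInTime step (cfgRestore x w c k) (some (cfgRestore x w (c + k) 0)) k) := by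
  induction k generalizing c with
  | zero => exact ⟨EvalsToInTime.refl _ _⟩
  | succ k ih =>
    rw [show c + (k + 1) = c + 1 + k by omega]
    exact nonempty_cons (step_restore_succ x w c k) (ih (c + 1))

theorem scan_of_ne_evalsToInTime {x : ITLetter} (hx : x ≠ t) {w : List ITLetter} {c k n : ℕ}
    {b : Option Config} (h : Nonempty (EvalsToInTime step (cfgRestore x w (c + k) 0) b n)) :
    Nonempty (EvalsToInTime step (cfgScan (x :: w) c k) b (n + k + 1)) :=
  nonempty_cons (step_scan_of_ne hx w c k) (nonempty_trans (restore_evalsToInTime x w c k) h)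

theorem scan_evalsToInTime (w : List ITLetter) (c k : ℕ) :
    Nonempty (EvalsToInTime step (cfgScan w c k) (some (cfgHalt (ITCode.scan w c k)))
      (4 * w.length + c + 2 * k + 5)) := by
  induction w generalizing c k with
  | nil =>
    exact nonempty_mono (nonempty_cons (step_scan_nil c k) (drain_evalsToInTime [] c k))
      (by simp only [List.length_nil]; omega)
  | cons x w ih =>
    rw [List.length_cons]
    cases x with
    | t =>
      cases c with
      | zero =>
        exact nonempty_mono (nonempty_cons (step_scan_t_zero w k) (drain_evalsToInTime w 0 k))
          (by omega)
      | succ c =>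
        exact nonempty_mono (nonempty_cons (step_scan_t_succ w c k) (ih c (k + 1)))
          (by omega)
    | m =>
      exact nonempty_mono (scan_of_ne_evalsToInTime (by decide)
        (nonempty_cons (step_restore_m w (c + k)) (ih (c + k + 1) 0))) (by omega)
    | l =>
      exact nonempty_mono (scan_of_ne_evalsToInTime (by decide)
        (nonempty_cons (step_restore_l w (c + k)) (ih (c + k) 0))) (by omega)
    | r =>
      exact nonempty_mono (scan_of_ne_evalsToInTime (by decide)
        (nonempty_cons (step_restore_r w (c + k)) (ih (c + k) 0))) (by omega)
    | f =>
      rcases hck : c + k with _ | d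
      · obtain ⟨rfl, rfl⟩ : c = 0 ∧ k = 0 := by omega
        rcases w with _ | ⟨y, w⟩
        · exact nonempty_mono (scan_of_ne_evalsToInTime (by decide)
            (nonempty_cons step_restore_f_zero_nil ⟨EvalsToInTime.refl _ _⟩)) (by simp)
        · exact nonempty_mono (scan_of_ne_evalsToInTime (by decide)
            (nonempty_cons (step_restore_f_zero_cons y w) (drain_evalsToInTime w 0 0)))
            (by simp only [List.length_cons]; omega)
      · rw [show ITCode.scan (f :: w) c k = ITCode.scan w d 0 by simp [ITCode.scan, hck]]
        have h := nonempty_cons (step_restore_f_succ w d) (ih d 0)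
        rw [← hck] at h
        exact nonempty_mono (scan_of_ne_evalsToInTime (by decide) h) (by omega)


theorem initList_eq (w : List ITLetter) : initList scanTM w = cfgScan w 0 0 := by
  show TM2.Cfg.mk _ _ _ = TM2.Cfg.mk _ _ _
  congr 1
  funext s
  cases s <;> rfl

theorem haltList_eq (b : Bool) : haltList scanTM [b] = cfgHalt b := by
  show TM2.Cfg.mk _ _ _ = TM2.Cfg.mk _ _ _
  congr 1
  funext s
  cases s <;> rfl

theorem tm2OutputsInTime (w : List ITLetter) :
    Nonempty (TM2OutputsInTime scanTM w (some [ITCode.scan w 0 0]) (4 * w.length + 5)) := by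
  unfold TM2OutputsInTime
  rw [Option.map_some, initList_eq, haltList_eq]
  exact nonempty_mono (scan_evalsToInTime w 0 0) (by omega)

end ScanTM

/-- The characteristic function of the set `E` of legal it-codewords is
computable by a Turing machine in polynomial time. -/
theorem legal_codewords_computable_in_polyTime :
    Nonempty (Turing.TM2ComputableInPolyTime itFinEncoding.encode
      Computability.encodingBoolBool.encode (fun w => decide (ITLegal w))) := by
  refine ⟨{ tm := ScanTM.scanTM
            inputAlphabet := Equiv.refl _
            outputAlphabet := Equiv.refl _
            time := 4 * Polynomial.X + 5
            outputsFun := fun w => ?_ }⟩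
  rw [ITCode.decide_itLegal_eq_scan]
  convert (ScanTM.tm2OutputsInTime w).some using 1
  congr 1
  · exact List.map_id w
  · simp [itFinEncoding]
end

section
/- The characteristic sequence of the primes is not P-recursive: letting a(n) = 1 if n is prime and a(n) = 0 otherwise, there do not exist d ≥ 0 and polynomials c₀, c₁, …, c_d with rational coefficients, with c_d ≠ 0, such that c_d(n)·a(n+d) + c_{d-1}(n)·a(n+d−1) + ⋯ + c₀(n)·a(n) = 0 for all sufficiently large n. -/
/-- A sequence `a : ℕ → ℚ` is P-recursive (holonomic) if there exist `d ≥ 0`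
and polynomials `c₀, …, c_d ∈ ℚ[x]` with `c_d ≠ 0` such that
`∑_{j=0}^{d} c_j(n) · a(n+j) = 0` for all sufficiently large `n`. -/
def PRecursive (a : ℕ → ℚ) : Prop :=
  ∃ (d : ℕ) (c : ℕ → Polynomial ℚ), c d ≠ 0 ∧
    ∀ᶠ n : ℕ in Filter.atTop,
      ∑ j ∈ Finset.range (d + 1), (c j).eval (n : ℚ) * a (n + j) = 0

/-- Key lemma: for any `N` and `d`, there is `n ≥ N` with `n + d` prime and
`n + j` composite for all `j < d`. -/
lemma exists_prime_after_gap (N d : ℕ) :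
    ∃ n, N ≤ n ∧ (n + d).Prime ∧ ∀ j < d, ¬ (n + j).Prime := by
  set m := N + d + 2 with hm
  set K := m.factorial with hK
  have hKm : m ≤ K := Nat.self_le_factorial m
  -- numbers K + i for 2 ≤ i ≤ m are composite
  have hcomp : ∀ i, 2 ≤ i → i ≤ m → ¬ (K + i).Prime := by
    intro i h2 him hp
    have hdvd : i ∣ K + i := by
      exact Nat.dvd_add (Nat.dvd_factorial (by omega) him) dvd_rfl
    rcases (Nat.Prime.eq_one_or_self_of_dvd hp i hdvd) with h | h
    · omega
    · have : 0 < K := Nat.factorial_pos m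
      omega
  obtain ⟨q0, hq0le, hq0p⟩ := Nat.exists_infinite_primes (K + 2)
  have hex : ∃ q, K + 2 ≤ q ∧ q.Prime := ⟨q0, hq0le, hq0p⟩
  set q := Nat.find hex with hq
  obtain ⟨hqle, hqp⟩ := Nat.find_spec hex
  have hmin : ∀ x, x < q → ¬ (K + 2 ≤ x ∧ x.Prime) := fun x hx => Nat.find_min hex hx
  -- q ≥ K + d + 2
  have hqbig : K + d + 2 ≤ q := by
    by_contra h
    push_neg at h
    have h2 : ∃ i, q = K + i ∧ 2 ≤ i ∧ i ≤ d + 1 := ⟨q - K, by omega⟩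
    obtain ⟨i, hqi, h2i, hid⟩ := h2
    exact hcomp i h2i (by omega) (hqi ▸ hqp)
  refine ⟨q - d, by omega, ?_, ?_⟩
  · have : q - d + d = q := by omega
    rw [this]; exact hqp
  · intro j hj hpj
    exact hmin (q - d + j) (by omega) ⟨by omega, hpj⟩

/-- The characteristic sequence of the primes, `a(n) = 1` if `n` is prime and
`a(n) = 0` otherwise, is not P-recursive. -/
theorem prime_indicator_not_pRecursive :
    ¬ PRecursive (fun n => if n.Prime then 1 else 0) := by
  rintro ⟨d, c, hc, hev⟩
  obtain ⟨N, hN⟩ := Filter.eventually_atTop.mp hev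
  -- for every M, there is n ≥ M with (c d).eval n = 0
  have key : ∀ M : ℕ, ∃ n, M ≤ n ∧ (c d).eval (n : ℚ) = 0 := by
    intro M
    obtain ⟨n, hn, hpd, hcomp⟩ := exists_prime_after_gap (max N M) d
    refine ⟨n, le_trans (le_max_right _ _) hn, ?_⟩
    have hsum := hN n (le_trans (le_max_left _ _) hn)
    rw [Finset.sum_range_succ] at hsum
    have h0 : ∑ j ∈ Finset.range d, (c j).eval (n : ℚ) *
        (if (n + j).Prime then (1:ℚ) else 0) = 0 := by
      apply Finset.sum_eq_zero
      intro j hj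
      rw [if_neg (hcomp j (Finset.mem_range.mp hj)), mul_zero]
    simp only [h0, if_pos hpd, mul_one, zero_add] at hsum
    exact hsum
  -- hence c d has infinitely many roots, so c d = 0
  apply hc
  apply Polynomial.eq_zero_of_infinite_isRoot
  have hT : {n : ℕ | (c d).eval (n : ℚ) = 0}.Infinite := by
    apply Set.infinite_of_not_bddAbove
    rintro ⟨b, hb⟩
    obtain ⟨n, hn, hroot⟩ := key (b + 1)
    have := hb hroot
    omega
  have : ((fun n : ℕ => (n : ℚ)) '' {n : ℕ | (c d).eval (n : ℚ) = 0}).Infinite :=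
    hT.image (Set.injOn_of_injective Nat.cast_injective)
  apply this.mono
  rintro x ⟨n, hn, rfl⟩
  exact hn
end
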